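/- For parameters q,t and variables x,y, define P_n(x,y;q,t) = n! \sum_{k=0}^n \binom{n-k+t+kq-1}{n-k}\binom{y}{k} x^k (generalized binomial coefficients as polynomials in t, q, y). Then as formal power series in z, 1+\sum_{n\ge 1} P_n(x,y;q,t) z^n/n! = (1-z)^{-t}\left(1 + \frac{xz}{(1-z)^q}\right)^y. -/

import Mathlib

open PowerSeries

/-- Composition `f ∘ g` of formal power series (intended for `g` with zero
constant coefficient). -/
noncomputable def psComp (f g : PowerSeries ℂ) : PowerSeries ℂ :=
  PowerSeries.mk fun n => ∑ k ∈ Finset.range (n + 1),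
    (PowerSeries.coeff k f) * (PowerSeries.coeff n (g ^ k))

/-- `e^u` for a power series `u` with zero constant coefficient. -/
noncomputable def psExp (u : PowerSeries ℂ) : PowerSeries ℂ :=
  psComp (PowerSeries.exp ℂ) u

/-- The power series `log(1 - z) = -∑_{n≥1} zⁿ/n`. -/
noncomputable def logOneSub : PowerSeries ℂ :=
  PowerSeries.mk fun n => if n = 0 then 0 else -(1 / (n : ℂ))

/-- The power series `log(1 + z) = ∑_{n≥1} (-1)^{n+1} zⁿ/n`. -/
noncomputable def logOneAdd : PowerSeries ℂ :=
  PowerSeries.mk fun n => if n = 0 then 0 else (-1) ^ (n + 1) / (n : ℂ)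

/-- The generalized binomial coefficient `m(m-1)⋯(m-j+1)/j!`. -/
noncomputable def genBinom (m : ℂ) (j : ℕ) : ℂ :=
  (∏ i ∈ Finset.range j, (m - i)) / (j.factorial : ℂ)

/-! A power series `F` with `F(0) ≠ 0` is determined by its constant term and a linear ODE
`a F' = b F` with `a ≠ 0`: the Wronskian of two solutions vanishes, so their quotient is
constant. This identifies `exp(-c log(1-z))` and `exp(y log(1+z))` with the binomial series
`∑ C(n+c-1, n) zⁿ` and `∑ C(y, n) zⁿ`. Substituting `u = xz(1-z)^{-q}` into the latter and
multiplying by `(1-z)^{-t}` expands the right-hand side as `∑ₖ C(y,k) xᵏ zᵏ (1-z)^{-(t+kq)}`,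
whose coefficient of `zⁿ` is the stated sum. -/

open Finset

section LinearODE

variable {K : Type*} [Field K] [CharZero K]

theorem PowerSeries.eq_of_mul_derivative_eq_mul {a b F G : K⟦X⟧} (ha : a ≠ 0)
    (hG : constantCoeff G ≠ 0) (hF : a * d⁄dX K F = b * F) (hG' : a * d⁄dX K G = b * G)
    (h0 : constantCoeff F = constantCoeff G) : F = G := by
  have hWronskian : d⁄dX K F * G = F * d⁄dX K G :=
    mul_left_cancel₀ ha (by linear_combination G * hF - F * hG')
  have hGinv : G * G⁻¹ = 1 := PowerSeries.mul_inv_cancel G hG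
  have hquot : F * G⁻¹ = 1 := by
    refine derivative.ext ?_ ?_
    · rw [Derivation.leibniz, derivative_inv', derivative_one, smul_eq_mul, smul_eq_mul]
      linear_combination G⁻¹ ^ 2 * hWronskian - (G⁻¹ * d⁄dX K F) * hGinv
    · rw [map_mul, constantCoeff_inv, h0, map_one, mul_inv_cancel₀ hG]
  calc F = F * G⁻¹ * G := by linear_combination (-F) * hGinv
    _ = G := by rw [hquot, one_mul]

end LinearODE

theorem PowerSeries.coeff_pow_eq_zero_of_lt {R : Type*} [CommSemiring R] {u : R⟦X⟧}
    (hu : constantCoeff u = 0) {k n : ℕ} (h : n < k) : coeff n (u ^ k) = 0 :=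
  X_pow_dvd_iff.mp (pow_dvd_pow_of_dvd (X_dvd_iff.mpr hu) k) n h

theorem coeff_psComp_eq_sum_range {u : ℂ⟦X⟧} (hu : constantCoeff u = 0) (f : ℂ⟦X⟧)
    {n N : ℕ} (h : n < N) :
    coeff n (psComp f u) = ∑ k ∈ range N, coeff k f * coeff n (u ^ k) := by
  rw [psComp, coeff_mk]
  refine sum_subset (range_subset_range.mpr h) fun k _ hk => ?_
  rw [coeff_pow_eq_zero_of_lt hu (by simpa using hk), mul_zero]

theorem psComp_eq_subst {u : ℂ⟦X⟧} (hu : constantCoeff u = 0) (f : ℂ⟦X⟧) :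
    psComp f u = f.subst u := by
  ext n
  rw [coeff_subst' (HasSubst.of_constantCoeff_zero' hu), finsum_eq_sum_of_support_subset
    (s := range (n + 1)), psComp, coeff_mk]
  · rfl
  · intro k hk
    by_contra hkn
    exact hk (by simp only [coeff_pow_eq_zero_of_lt hu (by simpa using hkn), smul_zero])

theorem coeff_psComp_mul {u : ℂ⟦X⟧} (hu : constantCoeff u = 0) (f v : ℂ⟦X⟧) (n : ℕ) :
    coeff n (psComp f u * v) =
      ∑ k ∈ range (n + 1), coeff k f * coeff n (u ^ k * v) := by
  calc coeff n (psComp f u * v)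
      = ∑ p ∈ antidiagonal n,
          ∑ k ∈ range (n + 1), coeff k f * (coeff p.1 (u ^ k) * coeff p.2 v) := by
        rw [coeff_mul]
        refine sum_congr rfl fun p hp => ?_
        rw [coeff_psComp_eq_sum_range hu f (Nat.antidiagonal.fst_lt hp), sum_mul]
        exact sum_congr rfl fun k _ => mul_assoc _ _ _
    _ = ∑ k ∈ range (n + 1), coeff k f * coeff n (u ^ k * v) := by
        rw [sum_comm]
        simp only [coeff_mul, mul_sum]

theorem constantCoeff_psExp (u : ℂ⟦X⟧) : constantCoeff (psExp u) = 1 := by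
  rw [← coeff_zero_eq_constantCoeff_apply, psExp, psComp, coeff_mk]
  simp

theorem psExp_eq_subst {u : ℂ⟦X⟧} (hu : constantCoeff u = 0) : psExp u = (exp ℂ).subst u :=
  psComp_eq_subst hu _

theorem derivative_psExp {u : ℂ⟦X⟧} (hu : constantCoeff u = 0) :
    d⁄dX ℂ (psExp u) = d⁄dX ℂ u * psExp u := by
  rw [psExp_eq_subst hu, derivative_subst (HasSubst.of_constantCoeff_zero' hu),
    derivative_exp, mul_comm]

theorem psExp_zero : psExp 0 = 1 := by
  rw [psExp_eq_subst (map_zero _), subst_zero_eq_C_constantCoeff, constantCoeff_exp, map_one,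
    map_one]

theorem psExp_add {u v : ℂ⟦X⟧} (hu : constantCoeff u = 0) (hv : constantCoeff v = 0) :
    psExp (u + v) = psExp u * psExp v := by
  have huv : constantCoeff (u + v) = 0 := by rw [map_add, hu, hv, add_zero]
  refine eq_of_mul_derivative_eq_mul (a := 1) (b := d⁄dX ℂ (u + v)) one_ne_zero ?_ ?_ ?_ ?_
  · simp [constantCoeff_psExp]
  · rw [one_mul, derivative_psExp huv]
  · rw [one_mul, Derivation.leibniz, derivative_psExp hu, derivative_psExp hv, map_add,
      smul_eq_mul, smul_eq_mul]
    ring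
  · simp [constantCoeff_psExp]

theorem psExp_nsmul {u : ℂ⟦X⟧} (hu : constantCoeff u = 0) (k : ℕ) :
    psExp (k • u) = psExp u ^ k := by
  induction k with
  | zero => rw [zero_smul, psExp_zero, pow_zero]
  | succ k ih => rw [succ_nsmul, psExp_add (by simp [hu]) hu, ih, pow_succ]

theorem genBinom_zero (m : ℂ) : genBinom m 0 = 1 := by
  simp [genBinom]

theorem genBinom_succ_mul (m : ℂ) (n : ℕ) :
    genBinom m (n + 1) * (n + 1) = genBinom m n * (m - n) := by
  have hn : (n + 1 : ℂ) ≠ 0 := n.cast_add_one_ne_zero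
  simp only [genBinom, prod_range_succ, Nat.factorial_succ, Nat.cast_mul, Nat.cast_succ]
  field_simp

theorem genBinom_add_one_succ_mul (m : ℂ) (n : ℕ) :
    genBinom (m + 1) (n + 1) * (n + 1) = genBinom m n * (m + 1) := by
  have hn : (n + 1 : ℂ) ≠ 0 := n.cast_add_one_ne_zero
  simp only [genBinom, prod_range_succ', Nat.factorial_succ, Nat.cast_mul, Nat.cast_succ,
    add_sub_add_right_eq_sub, CharP.cast_eq_zero, sub_zero]
  field_simp

theorem coeff_succ_one_sub_X_mul {R : Type*} [CommRing R] (f : R⟦X⟧) (n : ℕ) :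
    coeff (n + 1) ((1 - X) * f) = coeff (n + 1) f - coeff n f := by
  simp [sub_mul, coeff_succ_X_mul]

theorem coeff_succ_one_add_X_mul {R : Type*} [CommRing R] (f : R⟦X⟧) (n : ℕ) :
    coeff (n + 1) ((1 + X) * f) = coeff (n + 1) f + coeff n f := by
  simp [add_mul, coeff_succ_X_mul]

theorem constantCoeff_logOneSub : constantCoeff logOneSub = 0 := by
  rw [← coeff_zero_eq_constantCoeff_apply, logOneSub, coeff_mk, if_pos rfl]

theorem constantCoeff_logOneAdd : constantCoeff logOneAdd = 0 := by
  rw [← coeff_zero_eq_constantCoeff_apply, logOneAdd, coeff_mk, if_pos rfl]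

theorem coeff_derivative_logOneSub (n : ℕ) : coeff n (d⁄dX ℂ logOneSub) = -1 := by
  rw [coeff_derivative, logOneSub, coeff_mk, if_neg n.succ_ne_zero, Nat.cast_succ,
    neg_mul, one_div_mul_cancel n.cast_add_one_ne_zero]

theorem coeff_derivative_logOneAdd (n : ℕ) : coeff n (d⁄dX ℂ logOneAdd) = (-1) ^ n := by
  rw [coeff_derivative, logOneAdd, coeff_mk, if_neg n.succ_ne_zero, Nat.cast_succ,
    div_mul_cancel₀ _ n.cast_add_one_ne_zero]
  ring

theorem one_sub_X_mul_derivative_logOneSub : (1 - X) * d⁄dX ℂ logOneSub = -1 := by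
  ext (_ | n)
  · simpa [sub_mul] using coeff_derivative_logOneSub 0
  · simp [coeff_succ_one_sub_X_mul, coeff_derivative_logOneSub]

theorem one_add_X_mul_derivative_logOneAdd : (1 + X) * d⁄dX ℂ logOneAdd = 1 := by
  ext (_ | n)
  · simpa [add_mul] using coeff_derivative_logOneAdd 0
  · simp [coeff_succ_one_add_X_mul, coeff_derivative_logOneAdd, pow_succ]

noncomputable def negBinomSeries (c : ℂ) : ℂ⟦X⟧ :=
  mk fun n => genBinom (n + c - 1) n

noncomputable def binomSeries (y : ℂ) : ℂ⟦X⟧ :=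
  mk (genBinom y)

theorem coeff_succ_negBinomSeries_mul (c : ℂ) (n : ℕ) :
    coeff (n + 1) (negBinomSeries c) * (n + 1) = coeff n (negBinomSeries c) * (n + c) := by
  have harg : ((n + 1 : ℕ) : ℂ) + c - 1 = (n + c - 1) + 1 := by push_cast; ring
  simp only [negBinomSeries, coeff_mk, harg, genBinom_add_one_succ_mul]
  ring

theorem constantCoeff_negBinomSeries (c : ℂ) : constantCoeff (negBinomSeries c) = 1 := by
  rw [← coeff_zero_eq_constantCoeff_apply, negBinomSeries, coeff_mk, genBinom_zero]

theorem constantCoeff_binomSeries (y : ℂ) : constantCoeff (binomSeries y) = 1 := by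
  rw [← coeff_zero_eq_constantCoeff_apply, binomSeries, coeff_mk, genBinom_zero]

theorem one_sub_X_mul_derivative_negBinomSeries (c : ℂ) :
    (1 - X) * d⁄dX ℂ (negBinomSeries c) = C c * negBinomSeries c := by
  ext (_ | n)
  · rw [sub_mul, one_mul, map_sub, coeff_zero_X_mul, sub_zero, coeff_derivative, coeff_C_mul]
    linear_combination coeff_succ_negBinomSeries_mul c 0
  · rw [coeff_succ_one_sub_X_mul, coeff_derivative, coeff_derivative, coeff_C_mul]
    have h := coeff_succ_negBinomSeries_mul c (n + 1)
    push_cast at h ⊢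
    linear_combination h

theorem one_add_X_mul_derivative_binomSeries (y : ℂ) :
    (1 + X) * d⁄dX ℂ (binomSeries y) = C y * binomSeries y := by
  ext (_ | n)
  · rw [add_mul, one_mul, map_add, coeff_zero_X_mul, add_zero, coeff_derivative, coeff_C_mul]
    simp only [binomSeries, coeff_mk]
    linear_combination genBinom_succ_mul y 0
  · rw [coeff_succ_one_add_X_mul, coeff_derivative, coeff_derivative, coeff_C_mul]
    simp only [binomSeries, coeff_mk]
    have h := genBinom_succ_mul y (n + 1)
    push_cast at h ⊢
    linear_combination h

theorem psExp_neg_smul_logOneSub (c : ℂ) : psExp ((-c) • logOneSub) = negBinomSeries c := by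
  have h0 : constantCoeff ((-c) • logOneSub) = 0 := by simp [constantCoeff_logOneSub]
  refine eq_of_mul_derivative_eq_mul (a := 1 - X) (b := C c) ?_ ?_ ?_
    (one_sub_X_mul_derivative_negBinomSeries c) ?_
  · exact fun h => by simpa using congrArg constantCoeff h
  · simp [constantCoeff_negBinomSeries]
  · rw [derivative_psExp h0, Derivation.map_smul, smul_eq_C_mul, map_neg]
    linear_combination (-C c * psExp ((-c) • logOneSub)) * one_sub_X_mul_derivative_logOneSub
  · rw [constantCoeff_psExp, constantCoeff_negBinomSeries]

theorem psExp_smul_logOneAdd (y : ℂ) : psExp (y • logOneAdd) = binomSeries y := by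
  have h0 : constantCoeff (y • logOneAdd) = 0 := by simp [constantCoeff_logOneAdd]
  refine eq_of_mul_derivative_eq_mul (a := 1 + X) (b := C y) ?_ ?_ ?_
    (one_add_X_mul_derivative_binomSeries y) ?_
  · exact fun h => by simpa using congrArg constantCoeff h
  · simp [constantCoeff_binomSeries]
  · rw [derivative_psExp h0, Derivation.map_smul, smul_eq_C_mul]
    linear_combination (C y * psExp (y • logOneAdd)) * one_add_X_mul_derivative_logOneAdd
  · rw [constantCoeff_psExp, constantCoeff_binomSeries]

theorem psExp_smul_psComp_logOneAdd (y : ℂ) {u : ℂ⟦X⟧} (hu : constantCoeff u = 0) :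
    psExp (y • psComp logOneAdd u) = psComp (binomSeries y) u := by
  have hu' : HasSubst u := HasSubst.of_constantCoeff_zero' hu
  have h0 : constantCoeff (y • logOneAdd) = 0 := by simp [constantCoeff_logOneAdd]
  rw [psComp_eq_subst hu, psComp_eq_subst hu, ← subst_smul hu',
    psExp_eq_subst (constantCoeff_subst_eq_zero hu _ h0),
    ← subst_comp_subst_apply (HasSubst.of_constantCoeff_zero' h0) hu', ← psExp_eq_subst h0,
    psExp_smul_logOneAdd]

theorem pow_mul_psExp_neg_smul_logOneSub (x q t : ℂ) (k : ℕ) :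
    (C x * X * psExp ((-q) • logOneSub)) ^ k * psExp ((-t) • logOneSub) =
      C (x ^ k) * X ^ k * negBinomSeries (t + k * q) := by
  have hL (s : ℂ) : constantCoeff (s • logOneSub) = 0 := by simp [constantCoeff_logOneSub]
  have hexp : psExp ((-q) • logOneSub) ^ k * psExp ((-t) • logOneSub) =
      psExp ((-(t + k * q)) • logOneSub) := by
    rw [← psExp_nsmul (hL _), ← psExp_add (by simp [constantCoeff_logOneSub]) (hL _),
      ← Nat.cast_smul_eq_nsmul ℂ, smul_smul, ← add_smul]
    ring_nf
  rw [← psExp_neg_smul_logOneSub, ← hexp, mul_pow, mul_pow, map_pow]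
  ring

theorem coeff_pow_mul_psExp_neg_smul_logOneSub (x q t : ℂ) {k n : ℕ} (hk : k ≤ n) :
    coeff n ((C x * X * psExp ((-q) • logOneSub)) ^ k * psExp ((-t) • logOneSub)) =
      x ^ k * genBinom (((n - k : ℕ) : ℂ) + t + k * q - 1) (n - k) := by
  rw [pow_mul_psExp_neg_smul_logOneSub, mul_assoc, coeff_C_mul, coeff_X_pow_mul', if_pos hk,
    negBinomSeries, coeff_mk, add_assoc]

/-- `1 + ∑_{n≥1} Pₙ(x,y;q,t) zⁿ/n! = (1-z)^{-t} (1 + xz/(1-z)^q)^y`, where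
`Pₙ(x,y;q,t) = n! ∑ₖ C(n-k+t+kq-1, n-k) C(y,k) x^k`. -/
theorem moments_egf (x y q t : ℂ) :
    (PowerSeries.mk fun n =>
        if n = 0 then 1 else
          (∑ k ∈ Finset.range (n + 1),
            genBinom (((n - k : ℕ) : ℂ) + t + k * q - 1) (n - k) * genBinom y k * x ^ k)) =
      psExp ((-t) • logOneSub) *
        psExp (y • psComp logOneAdd
          (PowerSeries.C x * PowerSeries.X * psExp ((-q) • logOneSub))) := by
  have hu : constantCoeff (C x * X * psExp ((-q) • logOneSub)) = 0 := by simp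
  rw [psExp_smul_psComp_logOneAdd y hu, mul_comm]
  ext n
  have hterm : ∀ k ∈ range (n + 1), coeff k (binomSeries y) *
      coeff n ((C x * X * psExp ((-q) • logOneSub)) ^ k * psExp ((-t) • logOneSub)) =
        genBinom (((n - k : ℕ) : ℂ) + t + k * q - 1) (n - k) * genBinom y k * x ^ k := by
    intro k hk
    rw [binomSeries, coeff_mk,
      coeff_pow_mul_psExp_neg_smul_logOneSub x q t (mem_range_succ_iff.mp hk)]
    ring
  rw [coeff_psComp_mul hu, coeff_mk, sum_congr rfl hterm]
  split_ifs with hn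
  · simp [hn, genBinom_zero]
  · rfl
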